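/- arXiv:1311.3173 — 14 statements merged into one kernel-verified Lean document; each statement's English description precedes it below -/
import Mathlib

section
/- In any BE-algebra X, if f : X → [-1,0] is an N-ideal, then f((x*y)*y) ≤ f(x) for all x,y ∈ X. -/
class BEAlgebra (X : Type*) where
  star : X → X → X
  one : X
  star_self : ∀ x : X, star x x = one
  star_one : ∀ x : X, star x one = one
  one_star : ∀ x : X, star one x = x
  exchange : ∀ x y z : X, star x (star y z) = star y (star x z)

namespace BEAlgebra

variable {X : Type*} [BEAlgebra X]

/-- A nonempty subset `I` is an ideal of the BE-algebra `X`. -/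
def IsIdeal (I : Set X) : Prop :=
  I.Nonempty ∧ (∀ x : X, ∀ s ∈ I, star x s ∈ I) ∧
    (∀ x : X, ∀ s ∈ I, ∀ q ∈ I, star (star s (star q x)) x ∈ I)

/-- `f` is an `N`-ideal: every closed cut is empty or an ideal. -/
def IsNIdeal (f : X → ℝ) : Prop :=
  ∀ t ∈ Set.Icc (-1 : ℝ) 0, {x : X | f x ≤ t} = ∅ ∨ IsIdeal {x : X | f x ≤ t}

/-- `f` is an `([e],[e]∨[c_k])`-ideal of `X`. -/
def EeckIdeal (k : ℝ) (f : X → ℝ) : Prop :=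
  (∀ x y : X, ∀ t ∈ Set.Ico (-1 : ℝ) 0,
      f y ≤ t → (f (star x y) ≤ t ∨ f (star x y) + t + k + 1 < 0)) ∧
  (∀ x y z : X, ∀ t ∈ Set.Ico (-1 : ℝ) 0, ∀ r ∈ Set.Ico (-1 : ℝ) 0,
      f x ≤ t → f y ≤ r →
        (f (star (star x (star y z)) z) ≤ max t r ∨
          f (star (star x (star y z)) z) + max t r + k + 1 < 0))

/-- `X` is a transitive BE-algebra. -/
def Transitive (X : Type*) [BEAlgebra X] : Prop :=
  ∀ x y z : X, star (star y z) (star (star x y) (star x z)) = one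

end BEAlgebra

open BEAlgebra

variable {X : Type*} [BEAlgebra X]

theorem stmt1 (f : X → ℝ) (hf : ∀ x : X, f x ∈ Set.Icc (-1 : ℝ) 0)
    (hN : IsNIdeal f) : ∀ x y : X, f (star (star x y) y) ≤ f x := by
  intro x y
  have hx := hf x
  rcases hN (f x) hx with h | ⟨_, h1, h2⟩
  · exact absurd (Set.eq_empty_iff_forall_notMem.mp h x) (by simp)
  · have hxI : x ∈ {z : X | f z ≤ f x} := Set.mem_setOf_eq ▸ le_refl (f x)
    have h1I : (one : X) ∈ {z : X | f z ≤ f x} := by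
      have := h1 x x hxI
      rwa [star_self] at this
    have := h2 y one h1I x hxI
    rwa [one_star] at this
end

section
/- In any BE-algebra X, if f : X → [-1,0] is an N-ideal, then f(y) ≤ max{f(x), f(x*y)} for all x,y ∈ X. -/
open BEAlgebra

variable {X : Type*} [BEAlgebra X]

theorem stmt2 (f : X → ℝ) (hf : ∀ x : X, f x ∈ Set.Icc (-1 : ℝ) 0)
    (hN : IsNIdeal f) : ∀ x y : X, f y ≤ max (f x) (f (star x y)) := by
  intro x y
  set t := max (f x) (f (star x y)) with ht
  have hx : f x ≤ t := le_max_left _ _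
  have hxy : f (star x y) ≤ t := le_max_right _ _
  have htI : t ∈ Set.Icc (-1 : ℝ) 0 := by
    constructor
    · exact le_trans (hf x).1 hx
    · exact max_le (hf x).2 (hf (star x y)).2
  rcases hN t htI with h | h
  · exfalso
    have : x ∈ ({x : X | f x ≤ t} : Set X) := hx
    rw [h] at this
    exact this
  · obtain ⟨-, -, h3⟩ := h
    have := h3 y (star x y) hxy x hx
    rwa [star_self, one_star] at this
end

section
/- In any BE-algebra X, if f : X → [-1,0] is an N-ideal and x ≤ y (i.e., x*y = 1), then f(y) ≤ f(x). -/
open BEAlgebra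

variable {X : Type*} [BEAlgebra X]

theorem stmt3 (f : X → ℝ) (hf : ∀ x : X, f x ∈ Set.Icc (-1 : ℝ) 0)
    (hN : IsNIdeal f) : ∀ x y : X, star x y = one → f y ≤ f x := by
  intro x y hxy
  rcases hN (f x) (hf x) with h | h
  · exact absurd (Set.eq_empty_iff_forall_notMem.mp h x) (by simp)
  · have hx : x ∈ {z : X | f z ≤ f x} := Set.mem_setOf_eq ▸ le_refl (f x)
    have := h.2.2 y x hx x hx
    rw [hxy, BEAlgebra.star_one, BEAlgebra.one_star] at this
    exact this
end

section
/- A nonempty subset I of a BE-algebra X is an ideal of X if and only if: (1) 1 ∈ I, and (2) for all x,z ∈ X and y ∈ I, x*(y*z) ∈ I implies x*z ∈ I. -/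
open BEAlgebra

variable {X : Type*} [BEAlgebra X]

theorem stmt4 (I : Set X) (hI : I.Nonempty) :
    IsIdeal I ↔ (one : X) ∈ I ∧
      ∀ x z : X, ∀ y ∈ I, star x (star y z) ∈ I → star x z ∈ I := by
  constructor
  · rintro ⟨-, ha, hb⟩
    obtain ⟨s, hs⟩ := hI
    refine ⟨by simpa [star_self] using ha s s hs, ?_⟩
    intro x z y hy h
    have := hb (star x z) _ h y hy
    rwa [exchange x y z, star_self, one_star] at this
  · rintro ⟨h1, hc⟩
    refine ⟨hI, ?_, ?_⟩
    · intro x s hs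
      exact hc x s s hs (by simpa [BEAlgebra.star_self, BEAlgebra.star_one] using h1)
    · intro x s hs q hq
      have h2 : star (star s (star q x)) (star q x) ∈ I := by
        refine hc _ _ s hs ?_
        simpa [star_self] using h1
      exact hc _ x q hq h2
end

section
/- Let X be a BE-algebra and f : X → [-1,0], and fix k ∈ (-1,0]. Then f is an ([e],[e]∨[c_k])-ideal of X if and only if: (i) f(x*y) ≤ max{f(y), (-k-1)/2} for all x,y ∈ X, and (ii) f((x*(y*z))*z) ≤ max{f(x), f(y), (-k-1)/2} for all x,y,z ∈ X. -/
open BEAlgebra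

variable {X : Type*} [BEAlgebra X]

theorem stmt5 (k : ℝ) (hk : k ∈ Set.Ioc (-1 : ℝ) 0) (f : X → ℝ)
    (hf : ∀ x : X, f x ∈ Set.Icc (-1 : ℝ) 0) :
    EeckIdeal k f ↔
      ((∀ x y : X, f (star x y) ≤ max (f y) ((-k - 1) / 2)) ∧
        (∀ x y z : X, f (star (star x (star y z)) z) ≤
          max (f x) (max (f y) ((-k - 1) / 2)))) := by
  obtain ⟨hk1, hk2⟩ := hk
  have hm1 : (-1 : ℝ) ≤ (-k - 1) / 2 := by linarith
  have hm0 : (-k - 1) / 2 < 0 := by linarith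
  constructor
  · rintro ⟨h1, h2⟩
    constructor
    · intro x y
      by_contra h
      push_neg at h
      set M := max (f y) ((-k - 1) / 2) with hM
      have hMlb : (-1 : ℝ) ≤ M := le_trans hm1 (le_max_right _ _)
      have hMub : M < 0 := lt_of_lt_of_le h (hf _).2
      rcases h1 x y M ⟨hMlb, hMub⟩ (le_max_left _ _) with h' | h'
      · linarith
      · have : (-k - 1) / 2 ≤ M := le_max_right _ _
        linarith
    · intro x y z
      by_contra h
      push_neg at h
      set M := max (f x) (max (f y) ((-k - 1) / 2)) with hM
      have hMlb : (-1 : ℝ) ≤ M := le_trans hm1 (le_trans (le_max_right _ _) (le_max_right _ _))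
      have hMub : M < 0 := lt_of_lt_of_le h (hf _).2
      rcases h2 x y z M ⟨hMlb, hMub⟩ M ⟨hMlb, hMub⟩ (le_max_left _ _)
          (le_trans (le_max_left _ _) (le_max_right _ _)) with h' | h'
      · simp only [max_self] at h'; linarith
      · have : (-k - 1) / 2 ≤ M := le_trans (le_max_right _ _) (le_max_right _ _)
        simp only [max_self] at h'
        linarith
  · rintro ⟨h1, h2⟩
    constructor
    · intro x y t ⟨ht1, ht2⟩ hyt
      rcases le_or_gt ((-k - 1) / 2) t with h | h
      · left
        exact le_trans (h1 x y) (max_le hyt h)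
      · right
        have := h1 x y
        have hfy : f (star x y) ≤ (-k - 1) / 2 :=
          le_trans this (max_le (le_trans hyt h.le) le_rfl)
        linarith
    · intro x y z t ⟨ht1, ht2⟩ r ⟨hr1, hr2⟩ hxt hyr
      have key := h2 x y z
      rcases le_or_gt ((-k - 1) / 2) (max t r) with h | h
      · left
        exact le_trans key (max_le (le_trans hxt (le_max_left _ _))
          (max_le (le_trans hyr (le_max_right _ _)) h))
      · right
        have hfy : f (star (star x (star y z)) z) ≤ (-k - 1) / 2 :=
          le_trans key (max_le (le_trans hxt ((le_max_left t r).trans h.le))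
            (max_le (le_trans hyr ((le_max_right t r).trans h.le)) le_rfl))
        linarith
end

section
/- Let X be a BE-algebra, k ∈ (-1,0], and f : X → [-1,0] such that (1) f(1) ≤ max{f(x), (-k-1)/2} for all x ∈ X, and (2) f(x*z) ≤ max{f(x*(y*z)), f(y), (-k-1)/2} for all x,y,z ∈ X. Then for all x,y ∈ X, x*y = 1 implies f(y) ≤ max{f(x), (-k-1)/2}. -/
open BEAlgebra

variable {X : Type*} [BEAlgebra X]

theorem stmt8 (k : ℝ) (hk : k ∈ Set.Ioc (-1 : ℝ) 0) (f : X → ℝ)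
    (hf : ∀ x : X, f x ∈ Set.Icc (-1 : ℝ) 0)
    (h1 : ∀ x : X, f (one : X) ≤ max (f x) ((-k - 1) / 2))
    (h2 : ∀ x y z : X, f (star x z) ≤
      max (f (star x (star y z))) (max (f y) ((-k - 1) / 2))) :
    ∀ x y : X, star x y = one → f y ≤ max (f x) ((-k - 1) / 2) := by
  intro x y hxy
  have key := h2 one x y
  rw [one_star, hxy, star_self] at key
  exact key.trans (max_le (h1 x) le_rfl)
end

section
/- Let X be a transitive BE-algebra, k ∈ (-1,0], and f : X → [-1,0]. Then f is an ([e],[e]∨[c_k])-ideal of X if and only if: (1) f(1) ≤ max{f(x), (-k-1)/2} for all x ∈ X, and (2) f(x*z) ≤ max{f(x*(y*z)), f(y), (-k-1)/2} for all x,y,z ∈ X. -/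
open BEAlgebra

variable {X : Type*} [BEAlgebra X]

theorem stmt9 (htr : Transitive X) (k : ℝ) (hk : k ∈ Set.Ioc (-1 : ℝ) 0)
    (f : X → ℝ) (hf : ∀ x : X, f x ∈ Set.Icc (-1 : ℝ) 0) :
    ((∀ x y : X, f (star x y) ≤ max (f y) ((-k - 1) / 2)) ∧
      (∀ x y z : X, f (star (star x (star y z)) z) ≤
        max (f x) (max (f y) ((-k - 1) / 2)))) ↔
    ((∀ x : X, f (one : X) ≤ max (f x) ((-k - 1) / 2)) ∧
      (∀ x y z : X, f (star x z) ≤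
        max (f (star x (star y z))) (max (f y) ((-k - 1) / 2)))) := by
  constructor
  · rintro ⟨h1, h2⟩
    constructor
    · intro x
      have h := h2 x x one
      rw [BEAlgebra.star_one] at h
      exact h.trans (le_of_eq (by rw [← max_assoc, max_self]))
    · intro x y z
      have h := h2 (star x (star y z)) y (star x z)
      have e : star (star x (star y z)) (star y (star x z)) = one := by
        rw [exchange y x z, BEAlgebra.star_self]
      rw [e, one_star] at h
      exact h
  · rintro ⟨h1, h2⟩
    constructor
    · intro x y
      have h := h2 x y y
      rw [BEAlgebra.star_self, BEAlgebra.star_one] at h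
      exact h.trans (max_le (h1 y) le_rfl)
    · intro x y z
      set c := (-k - 1) / 2 with hc
      have hv : f (star (star y z) z) ≤ max (f y) c := by
        have h := h2 (star y z) y z
        rw [BEAlgebra.star_self] at h
        exact h.trans (max_le (h1 y) le_rfl)
      have hvle : max (f (star (star y z) z)) c ≤ max (f y) c :=
        max_le hv (le_max_right _ _)
      have hu : f (star (star x (star y z)) (star x z)) ≤ max (f y) c := by
        have h := h2 one (star (star y z) z) (star (star x (star y z)) (star x z))
        rw [one_star, one_star, htr x (star y z) z] at h
        exact h.trans (max_le ((h1 _).trans hvle) hvle)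
      have h := h2 (star x (star y z)) x z
      refine h.trans (max_le (hu.trans (le_max_right _ _)) (max_le (le_max_left _ _) ?_))
      exact (le_max_right (f y) c).trans (le_max_right _ _)
end

section
/- Let X be a transitive BE-algebra, k ∈ (-1,0], and f : X → [-1,0] an ([e],[e]∨[c_k])-ideal of X with f(1) > (-k-1)/2. Then f is an N-ideal of X, i.e., f(1) ≤ f(x) for all x and f(x*z) ≤ max{f(x*(y*z)), f(y)} for all x,y,z ∈ X. -/
open BEAlgebra

variable {X : Type*} [BEAlgebra X]

theorem stmt10 (htr : Transitive X) (k : ℝ) (hk : k ∈ Set.Ioc (-1 : ℝ) 0)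
    (f : X → ℝ) (hf : ∀ x : X, f x ∈ Set.Icc (-1 : ℝ) 0)
    (h1 : ∀ x y : X, f (star x y) ≤ max (f y) ((-k - 1) / 2))
    (h2 : ∀ x y z : X, f (star (star x (star y z)) z) ≤
      max (f x) (max (f y) ((-k - 1) / 2)))
    (hone : f (one : X) > (-k - 1) / 2) :
    (∀ x : X, f (one : X) ≤ f x) ∧
      (∀ x y z : X, f (star x z) ≤ max (f (star x (star y z))) (f y)) := by

  have hfirst : ∀ x : X, f (one : X) ≤ f x := by
    intro x
    have h := h1 x x
    rw [star_self] at h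
    rcases le_max_iff.mp h with h' | h'
    · exact h'
    · linarith
  refine ⟨hfirst, fun x y z => ?_⟩
  set c := (-k - 1) / 2 with hc
  set a := star x (star y z) with ha
  -- w := (a * (y*z)) * z
  set w := star (star a (star y z)) z with hw
  have hxa : star x (star a (star y z)) = one := by
    rw [exchange, ← ha, star_self]
  -- transitivity: (v*z)*(x*z) = 1 where v = a*(y*z)
  have htrans : star w (star x z) = one := by
    have := htr x (star a (star y z)) z
    rw [hxa, one_star] at this
    exact this
  -- f(x*z) ≤ max (f w) (max (f 1) c) via h2 with u=w, v=1, z'=x*z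
  have key : f (star x z) ≤ max (f w) (max (f (one : X)) c) := by
    have h := h2 w (one : X) (star x z)
    rw [one_star, htrans, one_star] at h
    exact h
  have hfw : f w ≤ max (f a) (max (f y) c) := h2 a y z
  have hca : c ≤ f a := le_of_lt (lt_of_lt_of_le hone (hfirst a))
  have h1a : f (one : X) ≤ f a := hfirst a
  have : f (star x z) ≤ max (f a) (f y) := by
    rcases le_max_iff.mp key with h' | h'
    · rcases le_max_iff.mp (le_trans h' hfw) with h'' | h''
      · exact le_max_of_le_left h''
      · rcases le_max_iff.mp h'' with h3 | h3
        · exact le_max_of_le_right h3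
        · exact le_max_of_le_left (le_trans h3 hca)
    · rcases le_max_iff.mp h' with h'' | h''
      · exact le_max_of_le_left (le_trans h'' h1a)
      · exact le_max_of_le_left (le_trans h'' hca)
  exact this
end

section
/- Let X be a transitive BE-algebra, k ∈ (-0.5, 0], and f : X → [-1,0] an ([e],[e]∨[c_k])-ideal of X. For t ∈ [-1, (-k-1)/2), define Q(f;t) = {x ∈ X | f(x)+t+k+1 < 0}. Then Q(f;t) is either empty or an ideal of X. -/
open BEAlgebra

variable {X : Type*} [BEAlgebra X]

theorem stmt11 (htr : Transitive X) (k : ℝ) (hk : k ∈ Set.Ioc (-(1:ℝ)/2) 0)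
    (f : X → ℝ) (hf : ∀ x : X, f x ∈ Set.Icc (-1 : ℝ) 0)
    (h1 : ∀ x y : X, f (star x y) ≤ max (f y) ((-k - 1) / 2))
    (h2 : ∀ x y z : X, f (star (star x (star y z)) z) ≤
      max (f x) (max (f y) ((-k - 1) / 2)))
    (t : ℝ) (ht : t ∈ Set.Ico (-1 : ℝ) ((-k - 1) / 2)) :
    {x : X | f x + t + k + 1 < 0} = ∅ ∨ IsIdeal {x : X | f x + t + k + 1 < 0} := by
  by_cases hE : {x : X | f x + t + k + 1 < 0} = ∅
  · exact Or.inl hE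
  · right
    have hhalf : (-k - 1) / 2 + t + k + 1 < 0 := by
      have := ht.2; linarith
    refine ⟨Set.nonempty_iff_ne_empty.mpr hE, ?_, ?_⟩
    · intro x s hs
      have := h1 x s
      simp only [Set.mem_setOf_eq] at hs ⊢
      rcases max_cases (f s) ((-k - 1) / 2) with ⟨h, _⟩ | ⟨h, _⟩ <;> rw [h] at this <;> linarith
    · intro x s hs q hq
      have := h2 s q x
      simp only [Set.mem_setOf_eq] at hs hq ⊢
      rcases max_cases (f q) ((-k - 1) / 2) with ⟨h, _⟩ | ⟨h, _⟩ <;> rw [h] at this <;>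
        rcases max_cases (f s) (f q) with ⟨h', _⟩ | ⟨h', _⟩ <;>
          first
          | (rw [h'] at this; linarith)
          | (rcases max_cases (f s) ((-k - 1) / 2) with ⟨h'', _⟩ | ⟨h'', _⟩ <;> rw [h''] at this <;> linarith)
end

section
/- Let X be a transitive BE-algebra and k ∈ (-1,0]. For f : X → [-1,0] and t ∈ [-1,0), define [f]_t = {x ∈ X | f(x) ≤ t} ∪ {x ∈ X | f(x)+t+k+1 ≤ 0}. Then f is an ([e],[e]∨[c_k])-ideal of X if and only if for every t ∈ [-1,0), the set [f]_t is either empty or an ideal of X. -/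
open BEAlgebra

variable {X : Type*} [BEAlgebra X]

theorem stmt12 (htr : Transitive X) (k : ℝ) (hk : k ∈ Set.Ioc (-1 : ℝ) 0)
    (f : X → ℝ) (hf : ∀ x : X, f x ∈ Set.Icc (-1 : ℝ) 0) :
    ((∀ x y : X, f (star x y) ≤ max (f y) ((-k - 1) / 2)) ∧
      (∀ x y z : X, f (star (star x (star y z)) z) ≤
        max (f x) (max (f y) ((-k - 1) / 2)))) ↔
    (∀ t ∈ Set.Ico (-1 : ℝ) 0,
      ({x : X | f x ≤ t} ∪ {x : X | f x + t + k + 1 ≤ 0}) = ∅ ∨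
        IsIdeal ({x : X | f x ≤ t} ∪ {x : X | f x + t + k + 1 ≤ 0})) := by
  obtain ⟨hk1, hk2⟩ := hk
  constructor
  · rintro ⟨h1, h2⟩ t ht
    by_cases hne : ({x : X | f x ≤ t} ∪ {x : X | f x + t + k + 1 ≤ 0}) = ∅
    · exact Or.inl hne
    right
    set m := max t (-t - k - 1) with hm
    have hmem : ∀ x : X,
        x ∈ ({x : X | f x ≤ t} ∪ {x : X | f x + t + k + 1 ≤ 0}) ↔ f x ≤ m := by
      intro x
      simp only [Set.mem_union, Set.mem_setOf_eq, hm, le_max_iff]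
      constructor
      · rintro (h | h)
        · exact Or.inl h
        · exact Or.inr (by linarith)
      · rintro (h | h)
        · exact Or.inl h
        · exact Or.inr (by linarith)
    have hcm : (-k - 1) / 2 ≤ m := by
      rcases le_total t ((-k - 1) / 2) with h | h
      · exact le_max_of_le_right (by linarith)
      · exact le_max_of_le_left h
    refine ⟨Set.nonempty_iff_ne_empty.mpr hne, ?_, ?_⟩
    · intro x s hs
      rw [hmem] at hs ⊢
      exact (h1 x s).trans (max_le hs hcm)
    · intro x s hs q hq
      rw [hmem] at hs hq ⊢
      exact (h2 s q x).trans (max_le hs (max_le hq hcm))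
  · intro h
    constructor
    · intro x y
      by_contra hc
      push_neg at hc
      set t := max (f y) ((-k - 1) / 2) with htdef
      have ht0 : t < 0 := lt_of_lt_of_le hc (hf _).2
      have ht1 : (-1 : ℝ) ≤ t := le_max_of_le_left (hf y).1
      have hy : y ∈ ({x : X | f x ≤ t} ∪ {x : X | f x + t + k + 1 ≤ 0}) :=
        Or.inl (show f _ ≤ t from le_max_left _ _)
      rcases h t ⟨ht1, ht0⟩ with he | hid
      · rw [he] at hy; exact hy
      · have hct : (-k - 1) / 2 ≤ t := le_max_right _ _
        rcases hid.2.1 x y hy with hle | hle <;>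
          simp only [Set.mem_setOf_eq] at hle <;> linarith
    · intro x y z
      by_contra hc
      push_neg at hc
      set t := max (f x) (max (f y) ((-k - 1) / 2)) with htdef
      have ht0 : t < 0 := lt_of_lt_of_le hc (hf _).2
      have ht1 : (-1 : ℝ) ≤ t := le_max_of_le_left (hf x).1
      have hx : x ∈ ({x : X | f x ≤ t} ∪ {x : X | f x + t + k + 1 ≤ 0}) :=
        Or.inl (show f _ ≤ t from le_max_left _ _)
      have hy : y ∈ ({x : X | f x ≤ t} ∪ {x : X | f x + t + k + 1 ≤ 0}) :=
        Or.inl (show f _ ≤ t from le_max_of_le_right (le_max_left _ _))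
      rcases h t ⟨ht1, ht0⟩ with he | hid
      · rw [he] at hx; exact hx
      · have hct : (-k - 1) / 2 ≤ t := le_max_of_le_right (le_max_right _ _)
        rcases hid.2.2 z x hx y hy with hle | hle <;>
          simp only [Set.mem_setOf_eq] at hle <;> linarith
end

section
/- Let X be a BE-algebra and f : X → [-1,0] an ([e],[e]∨[c])-ideal (the case k = 0). Then f(x*y) ≤ max{f(y), -0.5} for all x,y ∈ X, f(1) ≤ max{f(x), -0.5} for all x ∈ X, and f((x*y)*y) ≤ max{f(x), -0.5} for all x,y ∈ X. -/
open BEAlgebra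

variable {X : Type*} [BEAlgebra X]

theorem stmt14 (f : X → ℝ) (hf : ∀ x : X, f x ∈ Set.Icc (-1 : ℝ) 0)
    (h : EeckIdeal 0 f) :
    (∀ x y : X, f (star x y) ≤ max (f y) (-(1:ℝ)/2)) ∧
      (∀ x : X, f (one : X) ≤ max (f x) (-(1:ℝ)/2)) ∧
      (∀ x y : X, f (star (star x y) y) ≤ max (f x) (-(1:ℝ)/2)) := by
  obtain ⟨h1, h2⟩ := h
  have key : ∀ x y : X, f (star x y) ≤ max (f y) (-(1:ℝ)/2) := by
    intro x y
    by_cases hy0 : f y < 0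
    · set t := max (f y) (-(1:ℝ)/2) with ht
      have hy := hf y
      have htmem : t ∈ Set.Ico (-1 : ℝ) 0 := by
        constructor
        · exact le_trans (by norm_num) (le_max_right _ _)
        · exact max_lt hy0 (by norm_num)
      rcases h1 x y t htmem (le_max_left _ _) with hle | hlt
      · exact hle
      · have ht2 : (-(1:ℝ)/2) ≤ t := le_max_right _ _
        linarith
    · have : (0:ℝ) ≤ f y := le_of_not_gt hy0
      have := (hf (star x y)).2
      calc f (star x y) ≤ 0 := this
        _ ≤ f y := ‹(0:ℝ) ≤ f y›
        _ ≤ _ := le_max_left _ _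
  refine ⟨key, ?_, ?_⟩
  · intro x
    have := key x x
    rwa [star_self] at this
  · intro x y
    by_cases hx0 : f x < 0
    · set t := max (f x) (-(1:ℝ)/2) with ht
      have htmem : t ∈ Set.Ico (-1 : ℝ) 0 := by
        constructor
        · exact le_trans (by norm_num) (le_max_right _ _)
        · exact max_lt hx0 (by norm_num)
      have h1mem : f (one : X) ≤ t := by
        have := key x x
        rwa [star_self] at this
      rcases h2 x one y t htmem t htmem (le_max_left _ _) h1mem with hle | hlt
      · rwa [one_star, max_self] at hle
      · rw [one_star, max_self] at hlt
        have ht2 : (-(1:ℝ)/2) ≤ t := le_max_right _ _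
        linarith
    · have : (0:ℝ) ≤ f x := le_of_not_gt hx0
      calc f (star (star x y) y) ≤ 0 := (hf _).2
        _ ≤ f x := this
        _ ≤ _ := le_max_left _ _
end

section
/- Let X be a transitive BE-algebra, k ∈ (-1,0], and f : X → [-1,0] satisfying (1) f(1) ≤ max{f(x), (-k-1)/2} for all x, and (2) f(x*z) ≤ max{f(x*(y*z)), f(y), (-k-1)/2} for all x,y,z. Then f((x*(y*z))*(x*z)) ≤ max{f((y*z)*z), (-k-1)/2} for all x,y,z ∈ X. -/
open BEAlgebra

variable {X : Type*} [BEAlgebra X]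

theorem stmt17 (htr : Transitive X) (k : ℝ) (hk : k ∈ Set.Ioc (-1 : ℝ) 0)
    (f : X → ℝ) (hf : ∀ x : X, f x ∈ Set.Icc (-1 : ℝ) 0)
    (h1 : ∀ x : X, f (one : X) ≤ max (f x) ((-k - 1) / 2))
    (h2 : ∀ x y z : X, f (star x z) ≤
      max (f (star x (star y z))) (max (f y) ((-k - 1) / 2))) :
    ∀ x y z : X, f (star (star x (star y z)) (star x z)) ≤
      max (f (star (star y z) z)) ((-k - 1) / 2) := by
  intro x y z
  have key : star (star x (star y z)) (star (star (star y z) z) (star x z)) = one := by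
    rw [exchange]
    exact htr x (star y z) z
  have h := h2 (star x (star y z)) (star (star y z) z) (star x z)
  rw [key] at h
  exact h.trans (max_le (h1 (star (star y z) z)) le_rfl)
end

section
/- Let X be a BE-algebra, k ∈ (-1,0], and f : X → [-1,0]. If for all x,y ∈ X and t ∈ [-1,0), f(y) ≤ t implies (f(x*y) ≤ t or f(x*y)+t+k+1 < 0), then f(x*y) ≤ max{f(y), (-k-1)/2} for all x,y ∈ X. -/
open BEAlgebra

variable {X : Type*} [BEAlgebra X]

theorem stmt18 (k : ℝ) (hk : k ∈ Set.Ioc (-1 : ℝ) 0) (f : X → ℝ)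
    (hf : ∀ x : X, f x ∈ Set.Icc (-1 : ℝ) 0)
    (h : ∀ x y : X, ∀ t ∈ Set.Ico (-1 : ℝ) 0,
      f y ≤ t → (f (star x y) ≤ t ∨ f (star x y) + t + k + 1 < 0)) :
    ∀ x y : X, f (star x y) ≤ max (f y) ((-k - 1) / 2) := by
  intro x y
  set m := max (f y) ((-k - 1) / 2) with hm
  by_contra hc
  push_neg at hc
  have hfy := hf y
  have hfxy := hf (star x y)
  have hm1 : -1 ≤ m := le_trans hfy.1 (le_max_left _ _)
  have hm0 : m < 0 := lt_of_lt_of_le hc hfxy.2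
  have := h x y m ⟨hm1, hm0⟩ (le_max_left _ _)
  rcases this with h1 | h2
  · exact absurd h1 (not_le.mpr hc)
  · have hmk : (-k - 1) / 2 ≤ m := le_max_right _ _
    nlinarith
end

section
/- Let X be a BE-algebra, k ∈ (-1,0], and f : X → [-1,0]. If for all x,y,z ∈ X and t,r ∈ [-1,0), f(x) ≤ t and f(y) ≤ r imply (f((x*(y*z))*z) ≤ max{t,r} or f((x*(y*z))*z)+max{t,r}+k+1 < 0), then f((x*(y*z))*z) ≤ max{f(x), f(y), (-k-1)/2} for all x,y,z ∈ X. -/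
open BEAlgebra

variable {X : Type*} [BEAlgebra X]

theorem stmt19 (k : ℝ) (hk : k ∈ Set.Ioc (-1 : ℝ) 0) (f : X → ℝ)
    (hf : ∀ x : X, f x ∈ Set.Icc (-1 : ℝ) 0)
    (h : ∀ x y z : X, ∀ t ∈ Set.Ico (-1 : ℝ) 0, ∀ r ∈ Set.Ico (-1 : ℝ) 0,
      f x ≤ t → f y ≤ r →
        (f (star (star x (star y z)) z) ≤ max t r ∨
          f (star (star x (star y z)) z) + max t r + k + 1 < 0)) :
    ∀ x y z : X, f (star (star x (star y z)) z) ≤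
      max (f x) (max (f y) ((-k - 1) / 2)) := by
  intro x y z
  obtain ⟨hk1, hk0⟩ := hk
  have hc1 : (-1:ℝ) ≤ (-k-1)/2 := by linarith
  have hc0 : (-k-1)/2 < 0 := by linarith
  by_cases hx0 : f x = 0
  · calc f (star (star x (star y z)) z) ≤ 0 := (hf _).2
      _ = f x := hx0.symm
      _ ≤ _ := le_max_left _ _
  by_cases hy0 : f y = 0
  · calc f (star (star x (star y z)) z) ≤ 0 := (hf _).2
      _ = f y := hy0.symm
      _ ≤ _ := le_trans (le_max_left _ _) (le_max_right _ _)
  have hxlt : f x < 0 := lt_of_le_of_ne (hf x).2 hx0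
  have hylt : f y < 0 := lt_of_le_of_ne (hf y).2 hy0
  set t := max (f x) ((-k-1)/2) with ht
  set r := max (f y) ((-k-1)/2) with hr
  have htm : t ∈ Set.Ico (-1:ℝ) 0 := ⟨le_trans hc1 (le_max_right _ _), max_lt hxlt hc0⟩
  have hrm : r ∈ Set.Ico (-1:ℝ) 0 := ⟨le_trans hc1 (le_max_right _ _), max_lt hylt hc0⟩
  have := h x y z t htm r hrm (le_max_left _ _) (le_max_left _ _)
  have hM : max t r ≤ max (f x) (max (f y) ((-k-1)/2)) := by
    rw [ht, hr]
    exact max_le (max_le (le_max_left _ _)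
        (le_trans (le_max_right _ _) (le_max_right _ _)))
      (max_le (le_trans (le_max_left _ _) (le_max_right _ _))
        (le_trans (le_max_right _ _) (le_max_right _ _)))
  rcases this with h1 | h1
  · exact le_trans h1 hM
  · have h2 : (-k-1)/2 ≤ max t r := le_trans (le_max_right _ _) (le_max_left t r)
    have : f (star (star x (star y z)) z) ≤ (-k-1)/2 := by linarith
    exact le_trans this (le_trans (le_max_right _ _) (le_max_right _ _))
end
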